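/- Let g ≥ 1. Over ℝ, the matrix M^+ has exactly two eigenvalues: 2^g, whose eigenspace has dimension (1/3)(2^g + 1)(2^{g−1} + 1), and −2^{g−1}, whose eigenspace has dimension (1/3)(2^{2g} − 1). -/

import Mathlib

/-!
Write `χ(a) = (-1)^a` on `𝔽₂` and `β` for the polar form of `Q`, so that `M_{m,n} = χ(β(m,n))`.
For `m, n ∈ K⁺` the `(m,n)` entry of `(M⁺)²` is `Σ_{k ∈ K⁺} χ(β(m+n,k))`. Writing the indicator
of `K⁺` as `(1 + χ∘Q)/2`, this is half the sum of the character sum `Σ_k χ(β(m+n,k)) = 4^g [m = n]`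
and the Gauss sum `Σ_k χ(β(m+n,k) + Q k) = 2^g χ(Q(m+n)) = 2^g χ(β(m,n))`, both computed
coordinatewise. Hence `2 (M⁺)² = 2^g M⁺ + 4^g`, i.e. `(M⁺ - 2^g)(M⁺ + 2^(g-1)) = 0`, so `M⁺` is
diagonalizable with eigenvalues among `2^g` and `-2^(g-1)`. The two multiplicities are then
determined by their sum `|K⁺| = 2^(g-1)(2^g + 1)` and by `tr M⁺ = |K⁺|`.
-/

open scoped BigOperators

/-- The quadratic form `Σ_{i=1}^g x_i x_{g+i}` on `𝔽_2^{2g}`, with `𝔽_2^{2g}`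
realized as pairs `(x_1,…,x_g), (x_{g+1},…,x_{2g})`. -/
def Qf {g : ℕ} (x : (Fin g → ZMod 2) × (Fin g → ZMod 2)) : ZMod 2 :=
  ∑ i, x.1 i * x.2 i

/-- The `4^g × 4^g` matrix `M(g)` with entry
`M_{m,n} = (−1)^{Σ_i (m_i n_{g+i} + n_i m_{g+i})}` (exponent computed using
the representatives in `{0,1}`). -/
def Mmat (g : ℕ) :
    Matrix ((Fin g → ZMod 2) × (Fin g → ZMod 2)) ((Fin g → ZMod 2) × (Fin g → ZMod 2)) ℝ :=
  fun m n => (-1 : ℝ) ^ (∑ i, ((m.1 i).val * (n.2 i).val + (n.1 i).val * (m.2 i).val))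

/-- `M⁺`, the principal submatrix of `M(g)` indexed by `K_g^+ × K_g^+`. -/
def Mplus (g : ℕ) :
    Matrix {x : (Fin g → ZMod 2) × (Fin g → ZMod 2) // Qf x = 0}
      {x : (Fin g → ZMod 2) × (Fin g → ZMod 2) // Qf x = 0} ℝ :=
  fun m n => Mmat g m.1 n.1

/-- `M⁻`, the principal submatrix of `M(g)` indexed by `K_g^− × K_g^−`. -/
def Mminus (g : ℕ) :
    Matrix {x : (Fin g → ZMod 2) × (Fin g → ZMod 2) // Qf x = 1}
      {x : (Fin g → ZMod 2) × (Fin g → ZMod 2) // Qf x = 1} ℝ :=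
  fun m n => Mmat g m.1 n.1

/-- `N`, the submatrix of `M(g)` indexed by `K_g^+ × K_g^−`. -/
def Nmat (g : ℕ) :
    Matrix {x : (Fin g → ZMod 2) × (Fin g → ZMod 2) // Qf x = 0}
      {x : (Fin g → ZMod 2) × (Fin g → ZMod 2) // Qf x = 1} ℝ :=
  fun m n => Mmat g m.1 n.1

namespace Module.End

variable {K V : Type*} [Field K] [AddCommGroup V] [Module K V] {f : End K V} {a b : K}

theorem sub_smul_one_mul_sub_smul_one (f : End K V) (a b : K) :
    (f - a • 1) * (f - b • 1) = f * f - (a + b) • f + (a * b) • 1 := by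
  simp only [sub_mul, mul_sub, smul_mul_assoc, mul_smul_comm, one_mul, mul_one]
  module

theorem sub_smul_one_mul_sub_smul_one_comm (f : End K V) (a b : K) :
    (f - a • 1) * (f - b • 1) = (f - b • 1) * (f - a • 1) :=
  (((Commute.refl f).sub_right ((Commute.one_right f).smul_right b)).sub_left
    ((Commute.one_left _).smul_left a)).eq

theorem eq_or_eq_of_hasEigenvalue_of_mul_sub_eq_zero (h : (f - a • 1) * (f - b • 1) = 0)
    {μ : K} (hμ : f.HasEigenvalue μ) : μ = a ∨ μ = b := by
  obtain ⟨v, hv⟩ := hμ.exists_hasEigenvector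
  have hfv : f v = μ • v := hv.apply_eq_smul
  have hμv : ((μ - a) * (μ - b)) • v = 0 := by
    have hv0 : ((f - a • 1) * (f - b • 1)) v = 0 := by rw [h, LinearMap.zero_apply]
    simp only [mul_apply, LinearMap.sub_apply, LinearMap.smul_apply, one_apply, map_sub,
      map_smul, hfv] at hv0
    rw [← hv0]
    module
  rcases mul_eq_zero.mp ((smul_eq_zero.mp hμv).resolve_right hv.2) with h | h
  · exact .inl (sub_eq_zero.mp h)
  · exact .inr (sub_eq_zero.mp h)

theorem isProj_eigenspace_of_mul_sub_eq_zero (hab : a ≠ b) (h : (f - a • 1) * (f - b • 1) = 0) :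
    LinearMap.IsProj (f.eigenspace a) ((a - b)⁻¹ • (f - b • 1)) where
  map_mem x := by
    have hx : (f - a • 1) ((f - b • 1) x) = 0 := by rw [← mul_apply, h, LinearMap.zero_apply]
    rw [LinearMap.sub_apply, LinearMap.smul_apply, one_apply, sub_eq_zero] at hx
    rw [mem_eigenspace_iff, LinearMap.smul_apply, map_smul, smul_comm a, hx]
  map_id x hx := by
    rw [mem_eigenspace_iff] at hx
    rw [LinearMap.smul_apply, LinearMap.sub_apply, hx, LinearMap.smul_apply, one_apply, ← sub_smul,
      smul_smul, inv_mul_cancel₀ (sub_ne_zero.mpr hab), one_smul]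

theorem sub_mul_finrank_eigenspace_of_mul_sub_eq_zero [FiniteDimensional K V] (hab : a ≠ b)
    (h : (f - a • 1) * (f - b • 1) = 0) :
    (a - b) * finrank K (f.eigenspace a) = LinearMap.trace K V f - b * finrank K V := by
  have htr := (isProj_eigenspace_of_mul_sub_eq_zero hab h).trace
  rw [map_smul, map_sub, map_smul, LinearMap.trace_one, smul_eq_mul, smul_eq_mul] at htr
  rw [← htr, ← mul_assoc, mul_inv_cancel₀ (sub_ne_zero.mpr hab), one_mul]

end Module.End

theorem Fintype.prod_sum_eq_sum_arrowProd {ι α β R : Type*} [Fintype ι] [DecidableEq ι]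
    [Fintype α] [Fintype β] [CommSemiring R] (φ : ι → α × β → R) :
    ∏ i, ∑ p, φ i p = ∑ k : (ι → α) × (ι → β), ∏ i, φ i (k.1 i, k.2 i) := by
  rw [Fintype.prod_sum, ← (Equiv.arrowProdEquivProdArrow ι (fun _ => α) (fun _ => β)).sum_comp]
  rfl

theorem ZMod.two_eq_zero_or_one (a : ZMod 2) : a = 0 ∨ a = 1 := by
  revert a; decide

theorem ZMod.sum_two {M : Type*} [AddCommMonoid M] (f : ZMod 2 → M) : ∑ a, f a = f 0 + f 1 :=
  Fin.sum_univ_two f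

noncomputable def signChar (a : ZMod 2) : ℝ := (-1) ^ a.val

@[simp] theorem signChar_zero : signChar 0 = 1 := pow_zero _

@[simp] theorem signChar_one : signChar 1 = -1 := pow_one _

theorem signChar_natCast (n : ℕ) : signChar n = (-1) ^ n := by
  rw [signChar, ZMod.val_natCast, ← neg_one_pow_eq_pow_mod_two]

theorem signChar_add (a b : ZMod 2) : signChar (a + b) = signChar a * signChar b := by
  rw [signChar, ZMod.val_add, ← neg_one_pow_eq_pow_mod_two, pow_add]; rfl

theorem signChar_sum {ι : Type*} (s : Finset ι) (f : ι → ZMod 2) :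
    signChar (∑ i ∈ s, f i) = ∏ i ∈ s, signChar (f i) := by
  induction s using Finset.cons_induction with
  | empty => simp
  | cons a s ha ih => rw [Finset.sum_cons, Finset.prod_cons, signChar_add, ih]

abbrev F2Space (g : ℕ) : Type := (Fin g → ZMod 2) × (Fin g → ZMod 2)

section F2Space

variable {g : ℕ}

def sympForm (x y : F2Space g) : ZMod 2 := ∑ i, (x.1 i * y.2 i + y.1 i * x.2 i)

theorem sympForm_comm (x y : F2Space g) : sympForm x y = sympForm y x :=
  Finset.sum_congr rfl fun _ _ => add_comm _ _

theorem sympForm_add_left (x y z : F2Space g) :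
    sympForm (x + y) z = sympForm x z + sympForm y z := by
  simp only [sympForm, ← Finset.sum_add_distrib, Prod.fst_add, Prod.snd_add, Pi.add_apply]
  exact Finset.sum_congr rfl fun _ _ => by ring

theorem sympForm_self (x : F2Space g) : sympForm x x = 0 :=
  Finset.sum_eq_zero fun i _ => by rw [mul_comm (x.1 i)]; exact CharTwo.add_self_eq_zero _

theorem Qf_add (x y : F2Space g) : Qf (x + y) = Qf x + Qf y + sympForm x y := by
  simp only [Qf, sympForm, ← Finset.sum_add_distrib, Prod.fst_add, Prod.snd_add, Pi.add_apply]
  exact Finset.sum_congr rfl fun _ _ => by ring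

theorem Mmat_apply (x y : F2Space g) : Mmat g x y = signChar (sympForm x y) := by
  rw [Mmat, sympForm, ← signChar_natCast]
  push_cast [ZMod.natCast_val, ZMod.cast_id]
  rfl

theorem sum_signChar_sympForm (x : F2Space g) :
    ∑ k, signChar (sympForm x k) = if x = 0 then (4 : ℝ) ^ g else 0 := by
  have coord (u v : ZMod 2) :
      ∑ p : ZMod 2 × ZMod 2, signChar (u * p.2 + p.1 * v) = if u = 0 ∧ v = 0 then 4 else 0 := by
    rcases u.two_eq_zero_or_one with rfl | rfl <;> rcases v.two_eq_zero_or_one with rfl | rfl <;>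
      norm_num [Fintype.sum_prod_type, ZMod.sum_two, signChar_add]
  calc ∑ k, signChar (sympForm x k)
      = ∏ i, ∑ p : ZMod 2 × ZMod 2, signChar (x.1 i * p.2 + p.1 * x.2 i) := by
        simp only [sympForm, signChar_sum]
        exact (Fintype.prod_sum_eq_sum_arrowProd fun i p =>
          signChar (x.1 i * p.2 + p.1 * x.2 i)).symm
    _ = if x = 0 then (4 : ℝ) ^ g else 0 := by
        simp only [coord, Finset.prod_ite_zero, Finset.prod_const, Finset.card_univ,
          Fintype.card_fin, Finset.mem_univ, true_imp_iff, Prod.ext_iff, funext_iff, forall_and]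
        rfl

theorem sum_signChar_sympForm_add_Qf (x : F2Space g) :
    ∑ k, signChar (sympForm x k + Qf k) = 2 ^ g * signChar (Qf x) := by
  have coord (u v : ZMod 2) :
      ∑ p : ZMod 2 × ZMod 2, signChar (u * p.2 + p.1 * v + p.1 * p.2) = 2 * signChar (u * v) := by
    rcases u.two_eq_zero_or_one with rfl | rfl <;> rcases v.two_eq_zero_or_one with rfl | rfl <;>
      norm_num [Fintype.sum_prod_type, ZMod.sum_two, signChar_add]
  calc ∑ k, signChar (sympForm x k + Qf k)
      = ∏ i, ∑ p : ZMod 2 × ZMod 2, signChar (x.1 i * p.2 + p.1 * x.2 i + p.1 * p.2) := by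
        simp only [sympForm, Qf, ← Finset.sum_add_distrib, signChar_sum]
        exact (Fintype.prod_sum_eq_sum_arrowProd fun i p =>
          signChar (x.1 i * p.2 + p.1 * x.2 i + p.1 * p.2)).symm
    _ = 2 ^ g * signChar (Qf x) := by
        simp only [coord, Finset.prod_mul_distrib, Finset.prod_const, Finset.card_univ,
          Fintype.card_fin, Qf, signChar_sum]

abbrev Kplus (g : ℕ) : Type := {x : F2Space g // Qf x = 0}

theorem sum_Kplus_signChar_sympForm (x : F2Space g) :
    ∑ k : Kplus g, signChar (sympForm x k) =
      ((if x = 0 then (4 : ℝ) ^ g else 0) + 2 ^ g * signChar (Qf x)) / 2 := by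
  rw [← Finset.sum_subtype {k | Qf k = 0} (by simp) fun k => signChar (sympForm x k),
    Finset.sum_filter, ← sum_signChar_sympForm, ← sum_signChar_sympForm_add_Qf,
    ← Finset.sum_add_distrib, Finset.sum_div]
  refine Finset.sum_congr rfl fun k _ => ?_
  rcases (Qf k).two_eq_zero_or_one with h | h <;> simp [h, signChar_add]

theorem two_mul_card_Kplus (g : ℕ) : 2 * (Fintype.card (Kplus g) : ℝ) = 4 ^ g + 2 ^ g := by
  have h := sum_Kplus_signChar_sympForm (0 : F2Space g)
  simp only [sympForm, Qf, Prod.fst_zero, Prod.snd_zero, Pi.zero_apply, zero_mul, mul_zero,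
    add_zero, Finset.sum_const_zero, signChar_zero, Finset.sum_const, Finset.card_univ,
    nsmul_eq_mul, mul_one, if_true] at h
  linarith

theorem Mplus_apply (m n : Kplus g) : Mplus g m n = signChar (sympForm m.1 n.1) :=
  Mmat_apply _ _

theorem trace_Mplus (g : ℕ) : (Mplus g).trace = Fintype.card (Kplus g) := by
  simp [Matrix.trace, Mplus_apply, sympForm_self]

theorem two_smul_Mplus_mul_self (g : ℕ) :
    (2 : ℝ) • (Mplus g * Mplus g) = (2 : ℝ) ^ g • Mplus g + (4 : ℝ) ^ g • 1 := by
  ext m n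
  have hQ : Qf (m.1 + n.1) = sympForm m.1 n.1 := by rw [Qf_add, m.2, n.2, zero_add, zero_add]
  have hmn : m.1 + n.1 = 0 ↔ m = n := by
    rw [← ZModModule.sub_eq_add, sub_eq_zero, Subtype.ext_iff]
  calc ((2 : ℝ) • (Mplus g * Mplus g)) m n
      = 2 * ∑ k : Kplus g, signChar (sympForm (m.1 + n.1) k) := by
        simp only [Matrix.smul_apply, Matrix.mul_apply, Mplus_apply, smul_eq_mul,
          sympForm_add_left, signChar_add, sympForm_comm n.1]
    _ = ((2 : ℝ) ^ g • Mplus g + (4 : ℝ) ^ g • 1) m n := by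
        rw [sum_Kplus_signChar_sympForm, hQ]
        simp only [hmn, Matrix.add_apply, Matrix.smul_apply, Matrix.one_apply, Mplus_apply,
          smul_eq_mul]
        split_ifs <;> ring

theorem mulVecLin_Mplus_sub_mul_sub (hg : 1 ≤ g) :
    (Matrix.mulVecLin (Mplus g) - (2 : ℝ) ^ g • 1) *
      (Matrix.mulVecLin (Mplus g) - (-(2 : ℝ) ^ (g - 1)) • 1) = 0 := by
  set f := Matrix.mulVecLin (Mplus g)
  have hsq : (2 : ℝ) • (f * f) = (2 : ℝ) ^ g • f + (4 : ℝ) ^ g • 1 := by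
    have h := congrArg Matrix.toLinAlgEquiv' (two_smul_Mplus_mul_self g)
    simp only [map_smul, map_mul, map_add, map_one] at h
    exact h
  have h2g : (2 : ℝ) ^ g = 2 * 2 ^ (g - 1) := (mul_pow_sub_one (by omega) 2).symm
  have h4g : (4 : ℝ) ^ g = (2 ^ g) ^ 2 := by rw [← pow_mul, mul_comm, pow_mul]; norm_num
  refine smul_right_injective _ (two_ne_zero (α := ℝ)) ?_
  dsimp only
  rw [Module.End.sub_smul_one_mul_sub_smul_one, smul_zero, smul_add, smul_sub, hsq, h4g, h2g]
  module

theorem trace_mulVecLin_Mplus (g : ℕ) :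
    LinearMap.trace ℝ _ (Matrix.mulVecLin (Mplus g)) = Fintype.card (Kplus g) := by
  rw [← Matrix.toLin'_apply', Matrix.trace_toLin'_eq, trace_Mplus]

theorem three_mul_finrank_eigenspace_Mplus (hg : 1 ≤ g) :
    3 * (Module.finrank ℝ (Module.End.eigenspace (Matrix.mulVecLin (Mplus g)) (2 ^ g)) : ℝ) =
        (2 ^ g + 1) * (2 ^ (g - 1) + 1) ∧
      3 * (Module.finrank ℝ
          (Module.End.eigenspace (Matrix.mulVecLin (Mplus g)) (-2 ^ (g - 1))) : ℝ) =
        2 ^ (2 * g) - 1 := by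
  set f : Module.End ℝ (Kplus g → ℝ) := Matrix.mulVecLin (Mplus g)
  set c : ℝ := 2 ^ (g - 1)
  have hc : 0 < c := by positivity
  have h2g : (2 : ℝ) ^ g = 2 * c := (mul_pow_sub_one (by omega) 2).symm
  have hrel : (f - (2 * c) • 1) * (f - (-c) • 1) = 0 := h2g ▸ mulVecLin_Mplus_sub_mul_sub hg
  have hne : 2 * c ≠ -c := by linarith
  have hN : (Module.finrank ℝ (Kplus g → ℝ) : ℝ) = c * (2 * c + 1) := by
    have h := two_mul_card_Kplus g
    rw [show (4 : ℝ) ^ g = 2 ^ g * 2 ^ g by rw [← mul_pow]; norm_num, h2g] at h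
    rw [Module.finrank_fintype_fun_eq_card]
    linarith
  have hA := Module.End.sub_mul_finrank_eigenspace_of_mul_sub_eq_zero hne hrel
  have hB := Module.End.sub_mul_finrank_eigenspace_of_mul_sub_eq_zero hne.symm
    ((Module.End.sub_smul_one_mul_sub_smul_one_comm _ _ _).trans hrel)
  rw [trace_mulVecLin_Mplus, ← Module.finrank_fintype_fun_eq_card ℝ, hN] at hA hB
  rw [pow_mul', h2g]
  exact ⟨mul_left_cancel₀ hc.ne' (by linear_combination hA),
    mul_left_cancel₀ hc.ne' (by linear_combination -hB)⟩

end F2Space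

/-- `M⁺` has exactly two eigenvalues: `2^g` with eigenspace of dimension
`(1/3)(2^g+1)(2^{g−1}+1)`, and `−2^{g−1}` with eigenspace of dimension
`(1/3)(2^{2g}−1)`. -/
theorem Mplus_eigenvalues (g : ℕ) (hg : 1 ≤ g) :
    Module.End.HasEigenvalue (Matrix.mulVecLin (Mplus g)) ((2 : ℝ) ^ g) ∧
      Module.End.HasEigenvalue (Matrix.mulVecLin (Mplus g)) (-(2 : ℝ) ^ (g - 1)) ∧
      (∀ μ : ℝ, Module.End.HasEigenvalue (Matrix.mulVecLin (Mplus g)) μ →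
        μ = (2 : ℝ) ^ g ∨ μ = -(2 : ℝ) ^ (g - 1)) ∧
      3 * Module.finrank ℝ
          (Module.End.eigenspace (Matrix.mulVecLin (Mplus g)) ((2 : ℝ) ^ g)) =
        (2 ^ g + 1) * (2 ^ (g - 1) + 1) ∧
      3 * Module.finrank ℝ
          (Module.End.eigenspace (Matrix.mulVecLin (Mplus g)) (-(2 : ℝ) ^ (g - 1))) =
        2 ^ (2 * g) - 1 := by
  obtain ⟨hdA, hdB⟩ := three_mul_finrank_eigenspace_Mplus hg
  have hasEigenvalue {μ : ℝ}
      (h : (Module.finrank ℝ (Module.End.eigenspace (Matrix.mulVecLin (Mplus g)) μ) : ℝ) ≠ 0) :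
      Module.End.HasEigenvalue (Matrix.mulVecLin (Mplus g)) μ :=
    Module.End.hasEigenvalue_iff.mpr fun hbot => h (by rw [hbot, finrank_bot, Nat.cast_zero])
  have h4g : (1 : ℝ) < 2 ^ (2 * g) := one_lt_pow₀ one_lt_two (by omega)
  refine ⟨hasEigenvalue fun h => ?_, hasEigenvalue fun h => ?_, fun μ =>
    Module.End.eq_or_eq_of_hasEigenvalue_of_mul_sub_eq_zero (mulVecLin_Mplus_sub_mul_sub hg), ?_, ?_⟩
  · rw [h, mul_zero] at hdA
    exact absurd hdA.symm (by positivity)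
  · rw [h, mul_zero] at hdB
    linarith
  · exact_mod_cast hdA
  · rw [← Nat.cast_inj (R := ℝ), Nat.cast_sub Nat.one_le_two_pow]
    exact_mod_cast hdB
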